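/- arXiv:2410.19617 — 2 statements merged into one kernel-verified Lean document; each statement's English description precedes it below -/
import Mathlib

section
/- (MDI entanglement-witness soundness) In the setting of the soundness identity, suppose additionally that W is an entanglement witness in the sense that tr(W σ) ≥ 0 for every fully separable density matrix σ on ⊗_{j=1}^n ℂ^{d_j}. If ρ is fully separable, then for every choice of shared randomness π(μ) and local POVMs {Ξ^{(j)}_{μ,i}}, the MDI value is nonnegative: Σ_{i_1,…,i_n} Σ_{k_1,…,k_n} β^{i_1…i_n}_{k_1…k_n} P_Eve(i_1,…,i_n | k_1,…,k_n) ≥ 0. -/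
open Matrix BigOperators
open scoped ComplexOrder Kronecker

noncomputable section

/-- A density matrix: positive semidefinite with trace one. -/
def IsDensity {ι : Type*} [Fintype ι] (ρ : Matrix ι ι ℂ) : Prop :=
  ρ.PosSemidef ∧ ρ.trace = 1

/-- Kronecker (tensor) product of a finite family of matrices. -/
def famKron {J : Type*} [Fintype J] {ι κ : J → Type*}
    (M : ∀ j, Matrix (ι j) (κ j) ℂ) : Matrix (∀ j, ι j) (∀ j, κ j) ℂ :=
  fun a b => ∏ j, M j (a j) (b j)

/-- The maximally entangled state `Φ₊ = (1/d) Σ_{j,k} |jj⟩⟨kk|` on `ℂ^d ⊗ ℂ^d`. -/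
def maxEnt (d : ℕ) : Matrix (Fin d × Fin d) (Fin d × Fin d) ℂ :=
  fun p q => if p.1 = p.2 ∧ q.1 = q.2 then (d : ℂ)⁻¹ else 0

/-- The generalized Bell projector `(I ⊗ U) Φ₊ (I ⊗ U)†`, acting on the pair
(ancilla A', party A), ancilla first. -/
def bellProj {d : ℕ} (U : Matrix (Fin d) (Fin d) ℂ) :
    Matrix (Fin d × Fin d) (Fin d × Fin d) ℂ :=
  ((1 : Matrix (Fin d) (Fin d) ℂ) ⊗ₖ U) * maxEnt d *
    ((1 : Matrix (Fin d) (Fin d) ℂ) ⊗ₖ U)ᴴ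

/-- The state on `⊗_j (A'_j ⊗ A_j)` obtained by placing `ρ` on the `A` parts (second
components) and `⊗_j ω_j` on the ancilla `A'` parts (first components). -/
def assemble {n : ℕ} {d : Fin n → ℕ}
    (ρ : Matrix (∀ j, Fin (d j)) (∀ j, Fin (d j)) ℂ)
    (ω : ∀ j, Matrix (Fin (d j)) (Fin (d j)) ℂ) :
    Matrix (∀ j, Fin (d j) × Fin (d j)) (∀ j, Fin (d j) × Fin (d j)) ℂ :=
  fun p q => (∏ j, ω j (p j).1 (q j).1) * ρ (fun j => (p j).2) (fun j => (q j).2)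

/-- Partial trace over all the `A` parts (the second components of the pairs). -/
def ptraceA {n : ℕ} {d : Fin n → ℕ}
    (M : Matrix (∀ j, Fin (d j) × Fin (d j)) (∀ j, Fin (d j) × Fin (d j)) ℂ) :
    Matrix (∀ j, Fin (d j)) (∀ j, Fin (d j)) ℂ :=
  fun a' b' => ∑ a : ∀ j, Fin (d j), M (fun j => (a' j, a j)) (fun j => (b' j, a j))

/-- `N_{μ;i}`: the matrix on the ancilla (`A'`) parts obtained by partially tracing out
all `A` parts of `(⊗_j Ξ_{μ,i_j}) · (ρ on A, identity on A')`. -/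
def NEve {n M : ℕ} {d : Fin n → ℕ}
    (Ξ : Fin M → ∀ j, Fin ((d j) ^ 2) →
      Matrix (Fin (d j) × Fin (d j)) (Fin (d j) × Fin (d j)) ℂ)
    (ρ : Matrix (∀ j, Fin (d j)) (∀ j, Fin (d j)) ℂ)
    (μ : Fin M) (i : ∀ j, Fin ((d j) ^ 2)) :
    Matrix (∀ j, Fin (d j)) (∀ j, Fin (d j)) ℂ :=
  ptraceA (famKron (fun j => Ξ μ j (i j)) *
    assemble ρ (fun j => (1 : Matrix (Fin (d j)) (Fin (d j)) ℂ)))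

/-- The effective state
`ς = Σ_μ π(μ) Σ_i (⊗_j U_{i_j}^*) N_{μ;i} (⊗_j U_{i_j}ᵀ)` produced by Eve. -/
def sigmaEve {n M : ℕ} {d : Fin n → ℕ} (π : Fin M → ℝ)
    (Ξ : Fin M → ∀ j, Fin ((d j) ^ 2) →
      Matrix (Fin (d j) × Fin (d j)) (Fin (d j) × Fin (d j)) ℂ)
    (U : ∀ j, Fin ((d j) ^ 2) → Matrix (Fin (d j)) (Fin (d j)) ℂ)
    (ρ : Matrix (∀ j, Fin (d j)) (∀ j, Fin (d j)) ℂ) :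
    Matrix (∀ j, Fin (d j)) (∀ j, Fin (d j)) ℂ :=
  ∑ μ, (π μ : ℂ) • ∑ i : ∀ j, Fin ((d j) ^ 2),
    famKron (fun j => ((U j (i j))ᵀ)ᴴ) * NEve Ξ ρ μ i *
      famKron (fun j => (U j (i j))ᵀ)

/-- Full separability of an `n`-partite state. -/
def FullySeparable {n : ℕ} {d : Fin n → ℕ}
    (ρ : Matrix (∀ j, Fin (d j)) (∀ j, Fin (d j)) ℂ) : Prop :=
  ∃ (M : ℕ) (w : Fin M → ℝ)
    (σ : Fin M → ∀ j, Matrix (Fin (d j)) (Fin (d j)) ℂ),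
    (∀ m, 0 ≤ w m) ∧ (∑ m, w m = 1) ∧
    (∀ m j, IsDensity (σ m j)) ∧
    ρ = ∑ m, (w m : ℂ) • famKron (σ m)

/-! If `ρ = ⊗ⱼ σⱼ` and Eve measures `⊗ⱼ Ξⱼ`, each local factor `tr[Ξⱼ (τᵀ ⊗ σⱼ)]` equals
`tr[τ Lⱼᵀ]` for the positive semidefinite partial trace `Lⱼ = Tr_A[Ξⱼ (1 ⊗ σⱼ)]`. Conjugating by
the unitary `U_{iⱼ}`, the `β`-weighted sum over `k` collapses, by the decomposition of `W`, to
`tr[W ⊗ⱼ U Lⱼᵀ U†]`. This is nonnegative because a tensor product of positive semidefinite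
matrices is a nonnegative multiple of a product state. The general case follows by linearity in
the separable decomposition of `ρ` and in the shared randomness `π`. -/

section PartialTrace

variable {R ι κ τ : Type*} [Fintype τ]

def ptraceRight [AddCommMonoid R] (X : Matrix (ι × τ) (κ × τ) R) : Matrix ι κ R :=
  ∑ t, X.submatrix (·, t) (·, t)

lemma ptraceRight_apply [AddCommMonoid R] (X : Matrix (ι × τ) (κ × τ) R) (a : ι) (b : κ) :
    ptraceRight X a b = ∑ t, X (a, t) (b, t) := by
  simp [ptraceRight, Matrix.sum_apply]

variable [Fintype ι] [Fintype κ] [CommSemiring R]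

lemma trace_mul_kronecker_one [DecidableEq τ] (X : Matrix (ι × τ) (κ × τ) R)
    (ω : Matrix κ ι R) : (X * (ω ⊗ₖ (1 : Matrix τ τ R))).trace = (ptraceRight X * ω).trace := by
  simp only [Matrix.trace, Matrix.diag_apply, Matrix.mul_apply, Matrix.kroneckerMap_apply,
    Matrix.one_apply, mul_ite, mul_one, mul_zero, Fintype.sum_prod_type, Finset.sum_ite_eq',
    Finset.mem_univ, if_true, ptraceRight_apply, Finset.sum_mul]
  exact Finset.sum_congr rfl fun _ _ => Finset.sum_comm

lemma ptraceRight_mul_one_kronecker [DecidableEq ι] [DecidableEq κ]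
    (X : Matrix (ι × τ) (κ × τ) R) (Y : Matrix τ τ R) :
    ptraceRight (X * ((1 : Matrix κ κ R) ⊗ₖ Y)) = ptraceRight (((1 : Matrix ι ι R) ⊗ₖ Y) * X) := by
  ext a b
  simp only [ptraceRight_apply, Matrix.mul_apply, Matrix.kroneckerMap_apply, Matrix.one_apply,
    ite_mul, one_mul, zero_mul, mul_ite, mul_zero, Fintype.sum_prod_type, Finset.sum_ite_irrel,
    Finset.sum_const_zero, Finset.sum_ite_eq', Finset.mem_univ, if_true, Finset.sum_ite_eq]
  rw [Finset.sum_comm]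
  exact Finset.sum_congr rfl fun _ _ => Finset.sum_congr rfl fun _ _ => mul_comm _ _

end PartialTrace

section PositivePartialTrace

open scoped MatrixOrder

variable {𝕜 ι τ : Type*} [RCLike 𝕜] [Fintype τ]

lemma posSemidef_ptraceRight {X : Matrix (ι × τ) (ι × τ) 𝕜} (hX : X.PosSemidef) :
    (ptraceRight X).PosSemidef :=
  Matrix.posSemidef_sum _ fun _ _ => hX.submatrix _

lemma posSemidef_ptraceRight_mul_one_kronecker [Fintype ι] [DecidableEq ι] [DecidableEq τ]
    {Ξ : Matrix (ι × τ) (ι × τ) 𝕜} (hΞ : Ξ.PosSemidef)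
    {σ : Matrix τ τ 𝕜} (hσ : σ.PosSemidef) :
    (ptraceRight (Ξ * ((1 : Matrix ι ι 𝕜) ⊗ₖ σ))).PosSemidef := by
  obtain ⟨C, rfl⟩ := CStarAlgebra.nonneg_iff_eq_star_mul_self.mp hσ.nonneg
  have hfactor : (1 : Matrix ι ι 𝕜) ⊗ₖ (star C * C) =
      ((1 : Matrix ι ι 𝕜) ⊗ₖ C)ᴴ * ((1 : Matrix ι ι 𝕜) ⊗ₖ C) := by
    rw [Matrix.conjTranspose_kronecker, Matrix.conjTranspose_one, ← Matrix.mul_kronecker_mul,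
      Matrix.one_mul, Matrix.star_eq_conjTranspose]
  rw [hfactor, ← Matrix.mul_assoc, ptraceRight_mul_one_kronecker, ← Matrix.mul_assoc]
  exact posSemidef_ptraceRight (hΞ.mul_mul_conjTranspose_same _)

end PositivePartialTrace

lemma trace_conj_mul_conj {R ι : Type*} [Fintype ι] [DecidableEq ι] [CommSemiring R] [StarRing R]
    {U : Matrix ι ι R} (hU : Uᴴ * U = 1) (A B : Matrix ι ι R) :
    ((U * A * Uᴴ) * (U * B * Uᴴ)).trace = (A * B).trace := by
  have hconj : (U * A * Uᴴ) * (U * B * Uᴴ) = U * (A * B) * Uᴴ := by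
    simp only [Matrix.mul_assoc, ← Matrix.mul_assoc Uᴴ U, hU, Matrix.one_mul]
  rw [hconj, Matrix.trace_mul_cycle, ← Matrix.mul_assoc, hU, Matrix.one_mul]

lemma trace_mul_transpose_kronecker {ι κ : Type*} [Fintype ι] [DecidableEq ι] [Fintype κ]
    [DecidableEq κ] (Ξ : Matrix (ι × κ) (ι × κ) ℂ) (τ : Matrix ι ι ℂ) (σ : Matrix κ κ ℂ) :
    (Ξ * (τᵀ ⊗ₖ σ)).trace = (τ * (ptraceRight (Ξ * ((1 : Matrix ι ι ℂ) ⊗ₖ σ)))ᵀ).trace := by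
  have hsplit : τᵀ ⊗ₖ σ = ((1 : Matrix ι ι ℂ) ⊗ₖ σ) * (τᵀ ⊗ₖ (1 : Matrix κ κ ℂ)) := by
    rw [← Matrix.mul_kronecker_mul, Matrix.one_mul, Matrix.mul_one]
  rw [hsplit, ← Matrix.mul_assoc, trace_mul_kronecker_one, ← Matrix.trace_transpose,
    Matrix.transpose_mul, Matrix.transpose_transpose]

section FamKron

variable {J : Type*} [Fintype J] {ι κ ν : J → Type*}

lemma famKron_mul [DecidableEq J] [∀ j, Fintype (κ j)] (A : ∀ j, Matrix (ι j) (κ j) ℂ)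
    (B : ∀ j, Matrix (κ j) (ν j) ℂ) : famKron A * famKron B = famKron (fun j => A j * B j) := by
  ext a c
  simp only [Matrix.mul_apply, famKron, Fintype.prod_sum, Finset.prod_mul_distrib]

lemma trace_famKron [DecidableEq J] [∀ j, Fintype (ι j)] (A : ∀ j, Matrix (ι j) (ι j) ℂ) :
    (famKron A).trace = ∏ j, (A j).trace := by
  simp only [Matrix.trace, Matrix.diag, famKron, Fintype.prod_sum]

lemma famKron_smul (c : J → ℂ) (A : ∀ j, Matrix (ι j) (κ j) ℂ) :
    famKron (fun j => c j • A j) = (∏ j, c j) • famKron A := by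
  ext a b
  simp only [famKron, Matrix.smul_apply, smul_eq_mul, Finset.prod_mul_distrib]

lemma famKron_eq_zero_of_eq_zero {A : ∀ j, Matrix (ι j) (κ j) ℂ} {j₀ : J} (h : A j₀ = 0) :
    famKron A = 0 := by
  ext a b
  exact Finset.prod_eq_zero (Finset.mem_univ j₀) (by simp [h])

end FamKron

section Multipartite

variable {n : ℕ} {d : Fin n → ℕ}

lemma fullySeparable_famKron {σ : ∀ j, Matrix (Fin (d j)) (Fin (d j)) ℂ}
    (hσ : ∀ j, IsDensity (σ j)) : FullySeparable (famKron σ) :=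
  ⟨1, fun _ => 1, fun _ => σ, fun _ => zero_le_one, by simp, fun _ => hσ, by simp⟩

lemma trace_mul_famKron_nonneg {W : Matrix (∀ j, Fin (d j)) (∀ j, Fin (d j)) ℂ}
    (hW : ∀ σ, FullySeparable σ → 0 ≤ (W * σ).trace)
    {S : ∀ j, Matrix (Fin (d j)) (Fin (d j)) ℂ} (hS : ∀ j, (S j).PosSemidef) :
    0 ≤ (W * famKron S).trace := by
  by_cases hzero : ∃ j, S j = 0
  · obtain ⟨j, hj⟩ := hzero
    simp [famKron_eq_zero_of_eq_zero hj]
  have htrace : ∀ j, (S j).trace ≠ 0 := fun j h => hzero ⟨j, (hS j).trace_eq_zero_iff.mp h⟩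
  have hnormalized : ∀ j, IsDensity ((S j).trace⁻¹ • S j) := fun j =>
    ⟨(hS j).smul (inv_nonneg.mpr (hS j).trace_nonneg),
      by rw [Matrix.trace_smul, smul_eq_mul, inv_mul_cancel₀ (htrace j)]⟩
  have hS_eq : famKron S = (∏ j, (S j).trace) • famKron (fun j => (S j).trace⁻¹ • S j) := by
    rw [← famKron_smul]
    congr! 2 with j
    rw [smul_smul, mul_inv_cancel₀ (htrace j), one_smul]
  rw [hS_eq, Matrix.mul_smul, Matrix.trace_smul, smul_eq_mul]
  exact mul_nonneg (Finset.prod_nonneg fun j _ => (hS j).trace_nonneg)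
    (hW _ (fullySeparable_famKron hnormalized))

lemma assemble_sum_smul {ι : Type*} [Fintype ι] (c : ι → ℂ)
    (R : ι → Matrix (∀ j, Fin (d j)) (∀ j, Fin (d j)) ℂ)
    (ω : ∀ j, Matrix (Fin (d j)) (Fin (d j)) ℂ) :
    assemble (∑ m, c m • R m) ω = ∑ m, c m • assemble (R m) ω := by
  ext p q
  simp only [assemble, Matrix.sum_apply, Matrix.smul_apply, smul_eq_mul, Finset.mul_sum]
  exact Finset.sum_congr rfl fun m _ => mul_left_comm _ _ _

lemma assemble_famKron (σ ω : ∀ j, Matrix (Fin (d j)) (Fin (d j)) ℂ) :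
    assemble (famKron σ) ω = famKron (fun j => ω j ⊗ₖ σ j) := by
  ext p q
  simp [assemble, famKron, Matrix.kroneckerMap_apply, Finset.prod_mul_distrib]

lemma trace_sum_smul_mul_assemble_sum_smul {ι ν : Type*} [Fintype ι] [Fintype ν]
    (a : ι → ℂ) (X : ι → Matrix (∀ j, Fin (d j) × Fin (d j)) (∀ j, Fin (d j) × Fin (d j)) ℂ)
    (b : ν → ℂ) (R : ν → Matrix (∀ j, Fin (d j)) (∀ j, Fin (d j)) ℂ)
    (ω : ∀ j, Matrix (Fin (d j)) (Fin (d j)) ℂ) :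
    ((∑ μ, a μ • X μ) * assemble (∑ m, b m • R m) ω).trace =
      ∑ m, ∑ μ, b m * (a μ * (X μ * assemble (R m) ω).trace) := by
  simp only [assemble_sum_smul, Finset.sum_mul, Finset.mul_sum, Matrix.smul_mul, Matrix.mul_smul,
    Matrix.trace_sum, Matrix.trace_smul, smul_eq_mul]

lemma sum_trace_famKron_mul_assemble_famKron_nonneg {K : Fin n → Type*} [∀ j, Fintype (K j)]
    {W : Matrix (∀ j, Fin (d j)) (∀ j, Fin (d j)) ℂ}
    (hW : ∀ σ, FullySeparable σ → 0 ≤ (W * σ).trace)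
    {U : ∀ j, Matrix (Fin (d j)) (Fin (d j)) ℂ} (hU : ∀ j, (U j)ᴴ * U j = 1)
    {τ : ∀ j, K j → Matrix (Fin (d j)) (Fin (d j)) ℂ} {β : (∀ j, K j) → ℂ}
    (hdecomp : W = ∑ k, β k • famKron (fun j => U j * τ j (k j) * (U j)ᴴ))
    {Ξ : ∀ j, Matrix (Fin (d j) × Fin (d j)) (Fin (d j) × Fin (d j)) ℂ}
    (hΞ : ∀ j, (Ξ j).PosSemidef)
    {σ : ∀ j, Matrix (Fin (d j)) (Fin (d j)) ℂ} (hσ : ∀ j, (σ j).PosSemidef) :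
    0 ≤ ∑ k, β k * (famKron Ξ * assemble (famKron σ) (fun j => (τ j (k j))ᵀ)).trace := by
  set S := fun j => U j * (ptraceRight (Ξ j * ((1 : Matrix _ _ ℂ) ⊗ₖ σ j)))ᵀ * (U j)ᴴ
  have hS : ∀ j, (S j).PosSemidef := fun j =>
    (posSemidef_ptraceRight_mul_one_kronecker (hΞ j) (hσ j)).transpose.mul_mul_conjTranspose_same _
  have htrace : ∀ k : ∀ j, K j, (famKron Ξ * assemble (famKron σ) (fun j => (τ j (k j))ᵀ)).trace =
      (famKron (fun j => U j * τ j (k j) * (U j)ᴴ) * famKron S).trace := fun k => by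
    rw [assemble_famKron, famKron_mul, famKron_mul, trace_famKron, trace_famKron]
    exact Finset.prod_congr rfl fun j _ => by
      rw [trace_conj_mul_conj (hU j), trace_mul_transpose_kronecker]
  calc 0 ≤ (W * famKron S).trace := trace_mul_famKron_nonneg hW hS
    _ = _ := by
      simp only [hdecomp, Finset.sum_mul, Matrix.trace_sum, Matrix.smul_mul, Matrix.trace_smul,
        smul_eq_mul, htrace]

end Multipartite

theorem mdi_ew_soundness_general
    {n M : ℕ} (d : Fin n → ℕ)
    (U : ∀ j, Fin ((d j) ^ 2) → Matrix (Fin (d j)) (Fin (d j)) ℂ)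
    (hU : ∀ j i, (U j i)ᴴ * U j i = 1)
    (ρ : Matrix (∀ j, Fin (d j)) (∀ j, Fin (d j)) ℂ)
    (hρsep : FullySeparable ρ)
    (W : Matrix (∀ j, Fin (d j)) (∀ j, Fin (d j)) ℂ)
    (hWitness : ∀ σ : Matrix (∀ j, Fin (d j)) (∀ j, Fin (d j)) ℂ,
      FullySeparable σ → 0 ≤ (W * σ).trace)
    (τ : ∀ j, Fin ((d j) ^ 2) → Matrix (Fin (d j)) (Fin (d j)) ℂ)
    (β : (∀ j, Fin ((d j) ^ 2)) → (∀ j, Fin ((d j) ^ 2)) → ℝ)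
    (hdecomp : ∀ i, W = ∑ k : ∀ j, Fin ((d j) ^ 2),
      (β i k : ℂ) • famKron (fun j => U j (i j) * τ j (k j) * (U j (i j))ᴴ))
    (π : Fin M → ℝ) (hπ0 : ∀ μ, 0 ≤ π μ)
    (Ξ : Fin M → ∀ j, Fin ((d j) ^ 2) →
      Matrix (Fin (d j) × Fin (d j)) (Fin (d j) × Fin (d j)) ℂ)
    (hΞpos : ∀ μ j i, (Ξ μ j i).PosSemidef) :
    0 ≤ ∑ i : ∀ j, Fin ((d j) ^ 2), ∑ k : ∀ j, Fin ((d j) ^ 2),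
      (β i k : ℂ) *
        ((∑ μ, (π μ : ℂ) • famKron (fun j => Ξ μ j (i j))) *
          assemble ρ (fun j => (τ j (k j))ᵀ)).trace := by
  obtain ⟨m, w, σ, hw, -, hσ, rfl⟩ := hρsep
  have hregroup : ∀ i : ∀ j, Fin ((d j) ^ 2), ∑ k, (β i k : ℂ) *
      ((∑ μ, (π μ : ℂ) • famKron (fun j => Ξ μ j (i j))) *
        assemble (∑ m, (w m : ℂ) • famKron (σ m)) (fun j => (τ j (k j))ᵀ)).trace =
      ∑ m, ∑ μ, (w m : ℂ) * ((π μ : ℂ) * ∑ k, (β i k : ℂ) *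
        (famKron (fun j => Ξ μ j (i j)) * assemble (famKron (σ m)) (fun j => (τ j (k j))ᵀ)).trace) :=
    fun i => by
      simp only [trace_sum_smul_mul_assemble_sum_smul, Finset.mul_sum]
      rw [Finset.sum_comm]
      refine Finset.sum_congr rfl fun m _ => ?_
      rw [Finset.sum_comm]
      exact Finset.sum_congr rfl fun μ _ => Finset.sum_congr rfl fun k _ => by ring
  simp only [hregroup]
  refine Finset.sum_nonneg fun i _ => Finset.sum_nonneg fun m _ => Finset.sum_nonneg fun μ _ =>
    mul_nonneg (mod_cast hw m) (mul_nonneg (mod_cast hπ0 μ) ?_)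
  exact sum_trace_famKron_mul_assemble_famKron_nonneg hWitness (fun j => hU j (i j)) (hdecomp i)
    (fun j => hΞpos μ j (i j)) (fun j => (hσ m j).1)

/-- MDI entanglement-witness soundness: if `tr(Wσ) ≥ 0` for every fully separable state
`σ` and `ρ` is fully separable, then for every manipulation by Eve the MDI value is
nonnegative. -/
theorem mdi_ew_soundness
    {n M : ℕ} (d : Fin n → ℕ)
    (U : ∀ j, Fin ((d j) ^ 2) → Matrix (Fin (d j)) (Fin (d j)) ℂ)
    (hU : ∀ j i, (U j i)ᴴ * U j i = 1)
    (horth : ∀ j i i', ((U j i)ᴴ * U j i').trace = if i = i' then (d j : ℂ) else 0)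
    (ρ : Matrix (∀ j, Fin (d j)) (∀ j, Fin (d j)) ℂ) (hρ : IsDensity ρ)
    (hρsep : FullySeparable ρ)
    (W : Matrix (∀ j, Fin (d j)) (∀ j, Fin (d j)) ℂ) (hW : W.IsHermitian)
    (hWitness : ∀ σ : Matrix (∀ j, Fin (d j)) (∀ j, Fin (d j)) ℂ,
      FullySeparable σ → 0 ≤ (W * σ).trace)
    (τ : ∀ j, Fin ((d j) ^ 2) → Matrix (Fin (d j)) (Fin (d j)) ℂ)
    (hτ : ∀ j k, IsDensity (τ j k))
    (β : (∀ j, Fin ((d j) ^ 2)) → (∀ j, Fin ((d j) ^ 2)) → ℝ)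
    (hdecomp : ∀ i, W = ∑ k : ∀ j, Fin ((d j) ^ 2),
      (β i k : ℂ) • famKron (fun j => U j (i j) * τ j (k j) * (U j (i j))ᴴ))
    (π : Fin M → ℝ) (hπ0 : ∀ μ, 0 ≤ π μ) (hπ1 : ∑ μ, π μ = 1)
    (Ξ : Fin M → ∀ j, Fin ((d j) ^ 2) →
      Matrix (Fin (d j) × Fin (d j)) (Fin (d j) × Fin (d j)) ℂ)
    (hΞpos : ∀ μ j i, (Ξ μ j i).PosSemidef)
    (hΞsum : ∀ μ j, ∑ i, Ξ μ j i = 1) :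
    0 ≤ ∑ i : ∀ j, Fin ((d j) ^ 2), ∑ k : ∀ j, Fin ((d j) ^ 2),
      (β i k : ℂ) *
        ((∑ μ, (π μ : ℂ) • famKron (fun j => Ξ μ j (i j))) *
          assemble ρ (fun j => (τ j (k j))ᵀ)).trace :=
  mdi_ew_soundness_general d U hU ρ hρsep W hWitness τ β hdecomp π hπ0 Ξ hΞpos
end
end

section
/- (POVM lower bound for monotones) Fix n ≥ 1 and local dimensions d_1,…,d_n. Suppose given, for every n-tuple of local dimensions (m_1,…,m_n), a function E from positive semidefinite matrices on ⊗_{j=1}^n ℂ^{m_j} to nonnegative reals, satisfying: (i) homogeneity: E(cX) = c·E(X) for all c ≥ 0; (ii) transposition invariance: E(X^T) = E(X); (iii) monotonicity under selective local operations: for every finite family, indexed by r, of n-tuples of completely positive maps Λ_r^{(j)} (each given by Kraus operators, from ℂ^{m_j} to ℂ^{m'_j}) such that Σ_r ⊗_{j=1}^n Λ_r^{(j)} is trace preserving, one has E(X) ≥ Σ_r E((⊗_{j=1}^n Λ_r^{(j)})(X)). Let ρ be a density matrix on ⊗_{j=1}^n ℂ^{d_j} (parties A_j), and for each j let {Π^{(j)}_i}_{i∈X_j}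 be a POVM on ℂ^{d_j}⊗ℂ^{d_j} (the pair A_j⊗A'_j) with finite outcome set X_j. Define, for each outcome tuple (i_1,…,i_n), the unnormalized state ρ̃_{i_1…i_n} on ⊗_{j=1}^n ℂ^{d_j} (the A' parts) as the partial trace over all A parts of (⊗_j Π^{(j)}_{i_j}) · (ρ placed on the A parts and identity on the A' parts). Then E(ρ) ≥ (1/Π_{j=1}^n d_j) · Σ_{i_1∈X_1,…,i_n∈X_n} E(ρ̃_{i_1…i_n}). -/
open Matrix BigOperators
open scoped ComplexOrder Kronecker

noncomputable section

/-- Action of a tensor product of local completely positive maps, each given by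
Kraus operators `K j : Fin (c j) → Matrix (Fin (m' j)) (Fin (m j)) ℂ`. -/
def mapApply {n : ℕ} {m m' : Fin n → ℕ} {c : Fin n → ℕ}
    (K : ∀ j, Fin (c j) → Matrix (Fin (m' j)) (Fin (m j)) ℂ)
    (X : Matrix (∀ j, Fin (m j)) (∀ j, Fin (m j)) ℂ) :
    Matrix (∀ j, Fin (m' j)) (∀ j, Fin (m' j)) ℂ :=
  ∑ l : ∀ j, Fin (c j),
    famKron (fun j => K j (l j)) * X * (famKron (fun j => K j (l j)))ᴴ

/-- The state with `ρ` on the `A` parts (first components of the pairs `A_j ⊗ A'_j`)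
and the identity on the `A'` parts (second components). -/
def assembleA {n : ℕ} {d : Fin n → ℕ}
    (ρ : Matrix (∀ j, Fin (d j)) (∀ j, Fin (d j)) ℂ) :
    Matrix (∀ j, Fin (d j) × Fin (d j)) (∀ j, Fin (d j) × Fin (d j)) ℂ :=
  fun p q => ρ (fun j => (p j).1) (fun j => (q j).1) *
    ∏ j, (1 : Matrix (Fin (d j)) (Fin (d j)) ℂ) (p j).2 (q j).2

/-- Partial trace over all the `A` parts (the first components of the pairs). -/
def ptraceFirstParts {n : ℕ} {d : Fin n → ℕ}
    (M : Matrix (∀ j, Fin (d j) × Fin (d j)) (∀ j, Fin (d j) × Fin (d j)) ℂ) :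
    Matrix (∀ j, Fin (d j)) (∀ j, Fin (d j)) ℂ :=
  fun a' b' => ∑ a : ∀ j, Fin (d j), M (fun j => (a j, a' j)) (fun j => (a j, b' j))

/-!
Write each POVM element as `Π = B†B` and read each row of `B`, conjugated and scaled by
`1/√d_j`, as a Kraus operator `A_j → A'_j`. The resulting local map is
`X ↦ (1/d_j) Tr_A[Π (Xᵀ ⊗ 1)]`, so the product map indexed by an outcome tuple sends `ρᵀ` to
`ρ̃_i / ∏ d_j`, and completeness `Σ_i Π_i = 1` makes the family of these maps trace preserving.
Monotonicity at `ρᵀ`, transposition invariance and homogeneity then give the bound.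
-/

lemma IsDensity.nonempty {ι : Type*} [Fintype ι] {ρ : Matrix ι ι ℂ} (hρ : IsDensity ρ) :
    Nonempty ι := by
  by_contra h
  rw [not_nonempty_iff] at h
  simpa [Matrix.trace] using hρ.2

open scoped MatrixOrder in
lemma Matrix.PosSemidef.exists_kraus {α β : Type*} [Fintype α] [Fintype β]
    {P : Matrix (α × β) (α × β) ℂ} (hP : P.PosSemidef) {t : ℝ} (ht : 0 ≤ t) :
    ∃ K : Fin (Fintype.card (α × β)) → Matrix β α ℂ, ∀ a b a' b',
      ∑ k, K k a' a * star (K k b' b) = t * P (a, a') (b, b') := by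
  classical
  obtain ⟨B, rfl⟩ := CStarAlgebra.nonneg_iff_eq_star_mul_self.mp hP.nonneg
  let e := Fintype.equivFin (α × β)
  refine ⟨fun k a' a => (Real.sqrt t : ℂ) * star (B (e.symm k) (a, a')), fun a b a' b' => ?_⟩
  rw [star_eq_conjTranspose, mul_apply, Finset.mul_sum, ← e.symm.sum_comp]
  refine Finset.sum_congr rfl fun q _ => ?_
  have hsqrt : (Real.sqrt t : ℂ) * (Real.sqrt t : ℂ) = t := by
    rw [← Complex.ofReal_mul, Real.mul_self_sqrt ht]
  simp only [star_mul', Complex.star_def, Complex.conj_ofReal, conjTranspose_apply,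
    Complex.conj_conj]
  rw [← hsqrt]; ring

lemma famKron_one {J : Type*} [Fintype J] [DecidableEq J] {ι : J → Type*}
    [∀ j, DecidableEq (ι j)] :
    famKron (fun j => (1 : Matrix (ι j) (ι j) ℂ)) = 1 := by
  ext a b
  simp only [famKron, one_apply, Finset.prod_boole, Finset.mem_univ, forall_const, funext_iff]

lemma sum_famKron_pi {J : Type*} [Fintype J] [DecidableEq J] {x : J → Type*}
    [∀ j, Fintype (x j)] {ι κ : J → Type*} (P : ∀ j, x j → Matrix (ι j) (κ j) ℂ) :
    ∑ i : ∀ j, x j, famKron (fun j => P j (i j)) = famKron (fun j => ∑ i, P j i) := by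
  ext a b
  simp only [famKron, Matrix.sum_apply, Fintype.prod_sum]

section

variable {n : ℕ}

lemma mapApply_apply {m m' c : Fin n → ℕ}
    (K : ∀ j, Fin (c j) → Matrix (Fin (m' j)) (Fin (m j)) ℂ)
    (X : Matrix (∀ j, Fin (m j)) (∀ j, Fin (m j)) ℂ) (a' b' : ∀ j, Fin (m' j)) :
    mapApply K X a' b' =
      ∑ a, ∑ b, X a b * ∏ j, ∑ k, K j k (a' j) (a j) * star (K j k (b' j) (b j)) := by
  simp only [mapApply, famKron, Matrix.sum_apply, mul_apply, conjTranspose_apply, star_prod,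
    Fintype.prod_sum, Finset.sum_mul, Finset.mul_sum, Finset.prod_mul_distrib]
  rw [Finset.sum_comm_cycle]
  refine Finset.sum_congr rfl fun a _ => ?_
  rw [Finset.sum_comm]
  exact Finset.sum_congr rfl fun b _ => Finset.sum_congr rfl fun l _ => by ring

lemma posSemidef_mapApply {m m' c : Fin n → ℕ}
    (K : ∀ j, Fin (c j) → Matrix (Fin (m' j)) (Fin (m j)) ℂ)
    {X : Matrix (∀ j, Fin (m j)) (∀ j, Fin (m j)) ℂ} (hX : X.PosSemidef) :
    (mapApply K X).PosSemidef :=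
  posSemidef_sum _ fun _ _ => hX.mul_mul_conjTranspose_same _

variable {d : Fin n → ℕ}

lemma ptraceFirstParts_sum {ι : Type*} [Fintype ι]
    (M : ι → Matrix (∀ j, Fin (d j) × Fin (d j)) (∀ j, Fin (d j) × Fin (d j)) ℂ) :
    ptraceFirstParts (∑ i, M i) = ∑ i, ptraceFirstParts (M i) := by
  ext a' b'
  simp only [ptraceFirstParts, Matrix.sum_apply]
  exact Finset.sum_comm

lemma ptraceFirstParts_assembleA (Y : Matrix (∀ j, Fin (d j)) (∀ j, Fin (d j)) ℂ) :
    ptraceFirstParts (assembleA Y) = Y.trace • 1 := by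
  ext a' b'
  have hone := congrFun₂ (famKron_one (ι := fun j => Fin (d j))) a' b'
  simp only [famKron] at hone
  simp only [ptraceFirstParts, assembleA, hone, Matrix.smul_apply, smul_eq_mul, trace, diag,
    Finset.sum_mul]

lemma ptraceFirstParts_famKron_mul_assembleA_apply
    (P : ∀ j, Matrix (Fin (d j) × Fin (d j)) (Fin (d j) × Fin (d j)) ℂ)
    (ρ : Matrix (∀ j, Fin (d j)) (∀ j, Fin (d j)) ℂ) (a' b' : ∀ j, Fin (d j)) :
    ptraceFirstParts (famKron P * assembleA ρ) a' b' =
      ∑ a, ∑ b, ρ b a * ∏ j, P j (a j, a' j) (b j, b' j) := by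
  have hone := fun c => congrFun₂ (famKron_one (ι := fun j => Fin (d j))) c b'
  simp only [famKron] at hone
  simp only [ptraceFirstParts, mul_apply, famKron, assembleA, hone]
  refine Finset.sum_congr rfl fun a _ => ?_
  rw [← (Equiv.arrowProdEquivProdArrow _ _ _).symm.sum_comp, Fintype.sum_prod_type]
  simp [one_apply, mul_comm]

lemma mapApply_transpose_eq_smul_ptraceFirstParts {c : Fin n → ℕ}
    (K : ∀ j, Fin (c j) → Matrix (Fin (d j)) (Fin (d j)) ℂ)
    (P : ∀ j, Matrix (Fin (d j) × Fin (d j)) (Fin (d j) × Fin (d j)) ℂ) (t : Fin n → ℂ)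
    (hK : ∀ j a b a' b', ∑ k, K j k a' a * star (K j k b' b) = t j * P j (a, a') (b, b'))
    (X : Matrix (∀ j, Fin (d j)) (∀ j, Fin (d j)) ℂ) :
    mapApply K Xᵀ = (∏ j, t j) • ptraceFirstParts (famKron P * assembleA X) := by
  ext a' b'
  simp only [mapApply_apply, hK, ptraceFirstParts_famKron_mul_assembleA_apply, Matrix.smul_apply,
    smul_eq_mul, Finset.mul_sum, Finset.prod_mul_distrib, transpose_apply]
  exact Finset.sum_congr rfl fun a _ => Finset.sum_congr rfl fun b _ => by ring

lemma sum_trace_mapApply_eq_trace {x : Fin n → Type*} [∀ j, Fintype (x j)] {c : Fin n → ℕ}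
    (K : ∀ j, x j → Fin (c j) → Matrix (Fin (d j)) (Fin (d j)) ℂ)
    (P : ∀ j, x j → Matrix (Fin (d j) × Fin (d j)) (Fin (d j) × Fin (d j)) ℂ)
    (hP : ∀ j, ∑ i, P j i = 1) (t : Fin n → ℂ) (ht : (∏ j, t j) * ∏ j, (d j : ℂ) = 1)
    (hK : ∀ j i a b a' b',
      ∑ k, K j i k a' a * star (K j i k b' b) = t j * P j i (a, a') (b, b'))
    (X : Matrix (∀ j, Fin (d j)) (∀ j, Fin (d j)) ℂ) :
    ∑ i : ∀ j, x j, (mapApply (fun j => K j (i j)) X).trace = X.trace := by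
  classical
  have hmap (i : ∀ j, x j) := mapApply_transpose_eq_smul_ptraceFirstParts _ _ t
    (fun j => hK j (i j)) Xᵀ
  simp only [transpose_transpose] at hmap
  simp only [hmap, trace_smul, smul_eq_mul, ← Finset.mul_sum, ← trace_sum, ← ptraceFirstParts_sum,
    ← Finset.sum_mul, sum_famKron_pi, hP, famKron_one, one_mul, ptraceFirstParts_assembleA,
    trace_transpose, trace_one, Fintype.card_pi, Fintype.card_fin]
  push_cast
  linear_combination X.trace * ht

end

theorem povm_lower_bound_general
    {n : ℕ} (d : Fin n → ℕ)
    (E : ∀ m : Fin n → ℕ, Matrix (∀ j, Fin (m j)) (∀ j, Fin (m j)) ℂ → ℝ)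
    (hhom : ∀ (m : Fin n → ℕ) (X : Matrix (∀ j, Fin (m j)) (∀ j, Fin (m j)) ℂ),
      X.PosSemidef → ∀ c : ℝ, 0 ≤ c → E m ((c : ℂ) • X) = c * E m X)
    (htrans : ∀ (m : Fin n → ℕ) (X : Matrix (∀ j, Fin (m j)) (∀ j, Fin (m j)) ℂ),
      X.PosSemidef → E m Xᵀ = E m X)
    (hmono : ∀ (m m' : Fin n → ℕ) (R : ℕ) (c : Fin R → Fin n → ℕ)
      (K : ∀ r, ∀ j, Fin (c r j) → Matrix (Fin (m' j)) (Fin (m j)) ℂ),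
      (∀ X : Matrix (∀ j, Fin (m j)) (∀ j, Fin (m j)) ℂ,
        (∑ r, mapApply (K r) X).trace = X.trace) →
      ∀ X : Matrix (∀ j, Fin (m j)) (∀ j, Fin (m j)) ℂ, X.PosSemidef →
        ∑ r, E m' (mapApply (K r) X) ≤ E m X)
    (ρ : Matrix (∀ j, Fin (d j)) (∀ j, Fin (d j)) ℂ) (hρ : IsDensity ρ)
    (x : Fin n → Type) [∀ j, Fintype (x j)]
    (Po : ∀ j, x j → Matrix (Fin (d j) × Fin (d j)) (Fin (d j) × Fin (d j)) ℂ)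
    (hpos : ∀ j i, (Po j i).PosSemidef)
    (hsum : ∀ j, ∑ i, Po j i = 1) :
    (∏ j, (d j : ℝ))⁻¹ * ∑ i : ∀ j, x j,
        E d (ptraceFirstParts (famKron (fun j => Po j (i j)) * assembleA ρ))
      ≤ E d ρ := by
  classical
  have hd (j : Fin n) : (d j : ℝ) ≠ 0 := Nat.cast_ne_zero.mpr (hρ.nonempty.some j).pos.ne'
  choose K hK using fun j i => (hpos j i).exists_kraus (inv_nonneg.mpr (d j).cast_nonneg)
  simp only [Complex.ofReal_inv, Complex.ofReal_natCast] at hK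
  have ht : (∏ j, (d j : ℂ)⁻¹) * ∏ j, (d j : ℂ) = 1 := by
    rw [← Finset.prod_mul_distrib]
    exact Finset.prod_eq_one fun j _ => inv_mul_cancel₀ (mod_cast hd j)
  have hstate (i : ∀ j, x j) :
      ptraceFirstParts (famKron (fun j => Po j (i j)) * assembleA ρ) =
        ((∏ j, (d j : ℝ) : ℝ) : ℂ) • mapApply (fun j => K j (i j)) ρᵀ := by
    rw [mapApply_transpose_eq_smul_ptraceFirstParts _ _ _ (fun j => hK j (i j)), smul_smul]
    push_cast
    rw [mul_comm, ht, one_smul]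
  let e := (Fintype.equivFin (∀ j, x j)).symm
  have hmonoρ := hmono d d _ _ (fun r j => K j (e r j))
    (fun X => by
      rw [trace_sum, e.sum_comp fun i => (mapApply (fun j => K j (i j)) X).trace]
      exact sum_trace_mapApply_eq_trace K Po hsum _ ht hK X)
    ρᵀ hρ.1.transpose
  rw [htrans d ρ hρ.1, e.sum_comp fun i => E d (mapApply (fun j => K j (i j)) ρᵀ)] at hmonoρ
  calc _ = ∑ i : ∀ j, x j, E d (mapApply (fun j => K j (i j)) ρᵀ) := by
        simp only [hstate, hhom d _ (posSemidef_mapApply _ hρ.1.transpose) _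
          (Finset.prod_nonneg fun j _ => (d j).cast_nonneg), Finset.mul_sum]
        field_simp [Finset.prod_ne_zero_iff.mpr fun j _ => hd j]
    _ ≤ E d ρ := hmonoρ

/-- POVM lower bound for resource monotones: for any nonnegative, homogeneous,
transposition-invariant functional `E` that is monotone under selective local
operations, and any local POVMs `{Π^{(j)}_i}` on the pairs `A_j ⊗ A'_j`,
`E(ρ) ≥ (1/Π_j d_j) Σ_i E(ρ̃_i)`. -/
theorem povm_lower_bound
    {n : ℕ} (hn : 1 ≤ n) (d : Fin n → ℕ)
    (E : ∀ m : Fin n → ℕ, Matrix (∀ j, Fin (m j)) (∀ j, Fin (m j)) ℂ → ℝ)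
    (hnonneg : ∀ (m : Fin n → ℕ) (X : Matrix (∀ j, Fin (m j)) (∀ j, Fin (m j)) ℂ),
      X.PosSemidef → 0 ≤ E m X)
    (hhom : ∀ (m : Fin n → ℕ) (X : Matrix (∀ j, Fin (m j)) (∀ j, Fin (m j)) ℂ),
      X.PosSemidef → ∀ c : ℝ, 0 ≤ c → E m ((c : ℂ) • X) = c * E m X)
    (htrans : ∀ (m : Fin n → ℕ) (X : Matrix (∀ j, Fin (m j)) (∀ j, Fin (m j)) ℂ),
      X.PosSemidef → E m Xᵀ = E m X)
    (hmono : ∀ (m m' : Fin n → ℕ) (R : ℕ) (c : Fin R → Fin n → ℕ)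
      (K : ∀ r, ∀ j, Fin (c r j) → Matrix (Fin (m' j)) (Fin (m j)) ℂ),
      (∀ X : Matrix (∀ j, Fin (m j)) (∀ j, Fin (m j)) ℂ,
        (∑ r, mapApply (K r) X).trace = X.trace) →
      ∀ X : Matrix (∀ j, Fin (m j)) (∀ j, Fin (m j)) ℂ, X.PosSemidef →
        ∑ r, E m' (mapApply (K r) X) ≤ E m X)
    (ρ : Matrix (∀ j, Fin (d j)) (∀ j, Fin (d j)) ℂ) (hρ : IsDensity ρ)
    (x : Fin n → Type) [∀ j, Fintype (x j)]
    (Po : ∀ j, x j → Matrix (Fin (d j) × Fin (d j)) (Fin (d j) × Fin (d j)) ℂ)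
    (hpos : ∀ j i, (Po j i).PosSemidef)
    (hsum : ∀ j, ∑ i, Po j i = 1) :
    (∏ j, (d j : ℝ))⁻¹ * ∑ i : ∀ j, x j,
        E d (ptraceFirstParts (famKron (fun j => Po j (i j)) * assembleA ρ))
      ≤ E d ρ :=
  povm_lower_bound_general d E hhom htrans hmono ρ hρ x Po hpos hsum
end
end
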